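/- arXiv:1506.03002 — 5 statements merged into one kernel-verified Lean document; each statement's English description precedes it below -/
import Mathlib

section
/- The formal derivative T' of the Catalan generating function satisfies T'·(1 - x·T²) = T³, as an identity of formal power series. -/
open PowerSeries

noncomputable def catalanSeries : PowerSeries ℚ :=
  PowerSeries.mk fun k => (catalan k : ℚ)

theorem catalanSeries_eq_map_natCast :
    _root_.catalanSeries = map (Nat.castRingHom ℚ) PowerSeries.catalanSeries := by
  ext n
  simp [_root_.catalanSeries]

theorem catalanSeries_eq_one_add_X_mul_sq :
    _root_.catalanSeries = 1 + X * _root_.catalanSeries ^ 2 := by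
  rw [catalanSeries_eq_map_natCast]
  conv_lhs => rw [← catalanSeries_sq_mul_X_add_one]
  simp only [map_add, map_mul, map_pow, map_X, map_one]
  ring

section FunctionalEquation

variable {R : Type*} [CommRing R] {T : R⟦X⟧}

theorem derivative_mul_one_sub_two_X_mul_eq_sq (hT : T = 1 + X * T ^ 2) :
    d⁄dX R T * (1 - 2 * X * T) = T ^ 2 := by
  have hD : d⁄dX R T = T ^ 2 + 2 * X * T * d⁄dX R T := by
    conv_lhs => rw [hT]
    rw [map_add, Derivation.map_one_eq_zero, Derivation.leibniz, Derivation.leibniz_pow,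
      derivative_X]
    simp only [smul_eq_mul]
    ring
  linear_combination hD

theorem derivative_mul_one_sub_X_mul_sq_eq_pow_three (hT : T = 1 + X * T ^ 2) :
    d⁄dX R T * (1 - X * T ^ 2) = T ^ 3 := by
  -- modulo the functional equation, `1 - X * T ^ 2 = (1 - 2 * X * T) * T`
  linear_combination T * derivative_mul_one_sub_two_X_mul_eq_sq hT - d⁄dX R T * hT

end FunctionalEquation

theorem catalanSeries_derivative_equation :
    (d⁄dX ℚ _root_.catalanSeries) * (1 - PowerSeries.X * _root_.catalanSeries ^ 2) =
      _root_.catalanSeries ^ 3 :=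
  derivative_mul_one_sub_X_mul_sq_eq_pow_three catalanSeries_eq_one_add_X_mul_sq
end

section
/- The second formal derivative of the Catalan generating function satisfies T''·(1 - x·T²)³ = 2T⁵·(1 - x·T²) + 2T⁵, as an identity of formal power series. -/
open PowerSeries

namespace PowerSeries

variable {R : Type*} [CommRing R] {T : R⟦X⟧}

theorem derivative_mul_one_sub_two_X_mul_of_eq_one_add_X_mul_sq (hT : T = 1 + X * T ^ 2) :
    d⁄dX R T * (1 - 2 * X * T) = T ^ 2 := by
  have h : d⁄dX R T = T ^ 2 + 2 * X * T * d⁄dX R T := by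
    conv_lhs => rw [hT]
    simp only [map_add, Derivation.map_one_eq_zero, Derivation.leibniz, Derivation.leibniz_pow,
      derivative_X, smul_eq_mul]
    ring
  linear_combination h

theorem derivative_derivative_mul_one_sub_two_X_mul_of_eq_one_add_X_mul_sq
    (hT : T = 1 + X * T ^ 2) :
    d⁄dX R (d⁄dX R T) * (1 - 2 * X * T) = 4 * T * d⁄dX R T + 2 * X * d⁄dX R T ^ 2 := by
  have h := congrArg (d⁄dX R) (derivative_mul_one_sub_two_X_mul_of_eq_one_add_X_mul_sq hT)
  have h2 : d⁄dX R (2 : R⟦X⟧) = 0 := by exact_mod_cast (d⁄dX R).map_natCast 2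
  simp only [map_sub, Derivation.map_one_eq_zero, Derivation.leibniz, Derivation.leibniz_pow,
    derivative_X, h2, smul_eq_mul] at h
  linear_combination h

theorem derivative_derivative_mul_one_sub_X_mul_sq_pow_three_of_eq_one_add_X_mul_sq
    (hT : T = 1 + X * T ^ 2) :
    d⁄dX R (d⁄dX R T) * (1 - X * T ^ 2) ^ 3 =
      2 * T ^ 5 * (1 - X * T ^ 2) + 2 * T ^ 5 := by
  have h₁ := derivative_mul_one_sub_two_X_mul_of_eq_one_add_X_mul_sq hT
  have h₂ := derivative_derivative_mul_one_sub_two_X_mul_of_eq_one_add_X_mul_sq hT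
  have hT' : d⁄dX R T * (1 - X * T ^ 2) = T ^ 3 := by
    linear_combination T * h₁ - d⁄dX R T * hT
  have hT'' : d⁄dX R (d⁄dX R T) * (1 - X * T ^ 2) =
      4 * T ^ 2 * d⁄dX R T + 2 * X * T * d⁄dX R T ^ 2 := by
    linear_combination T * h₂ - d⁄dX R (d⁄dX R T) * hT
  linear_combination (1 - X * T ^ 2) ^ 2 * hT'' +
    (4 * T ^ 2 * (1 - X * T ^ 2) + 2 * X * T * (d⁄dX R T * (1 - X * T ^ 2) + T ^ 3)) * hT'

end PowerSeries

theorem catalanSeries_second_derivative_equation :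
    (d⁄dX ℚ (d⁄dX ℚ _root_.catalanSeries)) * (1 - PowerSeries.X * _root_.catalanSeries ^ 2) ^ 3 =
      2 * _root_.catalanSeries ^ 5 * (1 - PowerSeries.X * _root_.catalanSeries ^ 2)
        + 2 * _root_.catalanSeries ^ 5 :=
  derivative_derivative_mul_one_sub_X_mul_sq_pow_three_of_eq_one_add_X_mul_sq
    catalanSeries_eq_one_add_X_mul_sq
end

section
/- The generating series identity Σ_{k≥0} (k(k+1)/2)·Cat(k)·x^k = x·T³/(1 - x·T²)³ holds, i.e. (x²/2)·T'' + x·T' = x·T³/(1-xT²)³ as formal power series. -/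
open PowerSeries

/-!
Differentiating the functional equation `T = 1 + X T²` gives `T' (2 - T) = T³`, and once more
`T'' (2 - T) = T'² + 3 T² T'`; note that `2 - T = 1 - X T²`. Multiplying `X² T'' + 2 X T'` by
`(2 - T)³` and eliminating `T'`, `T''` and `X T²` with these relations leaves `2 X T³`. The
coefficient of `X^k` in `X² T'' + 2 X T'` is `(k (k - 1) + 2 k) Cat(k) = k (k + 1) Cat(k)`.
-/

namespace PowerSeries

theorem coeff_X_pow_mul_iterate_derivative {R : Type*} [CommSemiring R] (f : R⟦X⟧) (k n : ℕ) :
    coeff n (X ^ k * (d⁄dX R)^[k] f) = n.descFactorial k * coeff n f := by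
  rcases lt_or_ge n k with hnk | hkn
  · simp [coeff_X_pow_mul', Nat.not_le.mpr hnk, Nat.descFactorial_of_lt hnk]
  · obtain ⟨m, rfl⟩ := Nat.exists_eq_add_of_le' hkn
    rw [coeff_X_pow_mul, coeff_iterate_derivative, Nat.add_descFactorial_eq_ascFactorial]

theorem C_half_mul_X_sq_mul_derivative_derivative_add_X_mul_derivative {K : Type*} [Field K]
    [CharZero K] (f : K⟦X⟧) :
    C (1 / 2 : K) * X ^ 2 * d⁄dX K (d⁄dX K f) + X * d⁄dX K f =
      mk fun k => (k * (k + 1) / 2 : K) * coeff k f := by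
  ext n
  have h1 : coeff n (X * d⁄dX K f) = n * coeff n f := by
    simpa using coeff_X_pow_mul_iterate_derivative f 1 n
  have h2 : coeff n (X ^ 2 * d⁄dX K (d⁄dX K f)) = n.descFactorial 2 * coeff n f :=
    coeff_X_pow_mul_iterate_derivative f 2 n
  rw [map_add, mul_assoc, coeff_C_mul, h1, h2, coeff_mk]
  cases n with
  | zero => simp
  | succ n =>
    rw [Nat.succ_descFactorial_succ, Nat.descFactorial_one]
    push_cast
    ring

section QuadraticEquation

variable {R : Type*} [CommRing R] {f : R⟦X⟧}

theorem derivative_mul_two_sub_of_sq_mul_X_add_one (hf : f ^ 2 * X + 1 = f) :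
    d⁄dX R f * (2 - f) = f ^ 3 := by
  have hd := congrArg (d⁄dX R) hf
  simp only [map_add, derivative_one, Derivation.leibniz, Derivation.leibniz_pow, derivative_X,
    smul_eq_mul] at hd
  linear_combination (-f) * hd + 2 * d⁄dX R f * hf

theorem derivative_derivative_mul_two_sub_of_sq_mul_X_add_one (hf : f ^ 2 * X + 1 = f) :
    d⁄dX R (d⁄dX R f) * (2 - f) = d⁄dX R f ^ 2 + 3 * f ^ 2 * d⁄dX R f := by
  have hd := congrArg (d⁄dX R) (derivative_mul_two_sub_of_sq_mul_X_add_one hf)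
  have h2 : d⁄dX R (2 : R⟦X⟧) = 0 := by exact_mod_cast (d⁄dX R).map_natCast 2
  simp only [Derivation.leibniz, Derivation.leibniz_pow, map_sub, h2, smul_eq_mul] at hd
  linear_combination hd

theorem X_sq_mul_derivative_derivative_add_two_mul_X_mul_derivative_of_sq_mul_X_add_one
    (hf : f ^ 2 * X + 1 = f) :
    (X ^ 2 * d⁄dX R (d⁄dX R f) + 2 * X * d⁄dX R f) * (1 - X * f ^ 2) ^ 3 = 2 * X * f ^ 3 := by
  have hd := derivative_mul_two_sub_of_sq_mul_X_add_one hf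
  have hdd := derivative_derivative_mul_two_sub_of_sq_mul_X_add_one hf
  set d := d⁄dX R f
  rw [show 1 - X * f ^ 2 = 2 - f by linear_combination -hf]
  linear_combination X ^ 2 * (2 - f) ^ 2 * hdd
    + (X ^ 2 * (d * (2 - f) + f ^ 3) + 3 * X ^ 2 * f ^ 2 * (2 - f) + 2 * X * (2 - f) ^ 2) * hd
    + X * f ^ 3 * (f + 3 * (2 - f)) * hf

end QuadraticEquation

end PowerSeries

@[simp]
theorem coeff_catalanSeries (n : ℕ) : coeff n _root_.catalanSeries = catalan n := by
  simp [_root_.catalanSeries]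

theorem catalanSeries_sq_mul_X_add_one :
    _root_.catalanSeries ^ 2 * X + 1 = _root_.catalanSeries := by
  have hmap : map (Nat.castRingHom ℚ) PowerSeries.catalanSeries = _root_.catalanSeries := by
    ext n
    simp
  simpa [hmap] using
    congrArg (map (Nat.castRingHom ℚ)) PowerSeries.catalanSeries_sq_mul_X_add_one

theorem case_one_series :
    (PowerSeries.mk fun k => (k * (k + 1) / 2 : ℚ) * (catalan k : ℚ)) *
        (1 - PowerSeries.X * _root_.catalanSeries ^ 2) ^ 3 =
      PowerSeries.X * _root_.catalanSeries ^ 3 ∧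
    PowerSeries.C (1/2 : ℚ) * PowerSeries.X ^ 2 * (d⁄dX ℚ (d⁄dX ℚ _root_.catalanSeries))
        + PowerSeries.X * (d⁄dX ℚ _root_.catalanSeries) =
      (PowerSeries.mk fun k => (k * (k + 1) / 2 : ℚ) * (catalan k : ℚ)) := by
  have hcoeff := C_half_mul_X_sq_mul_derivative_derivative_add_X_mul_derivative _root_.catalanSeries
  simp only [coeff_catalanSeries] at hcoeff
  refine ⟨?_, hcoeff⟩
  rw [← hcoeff]
  have hmain := X_sq_mul_derivative_derivative_add_two_mul_X_mul_derivative_of_sq_mul_X_add_one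
    _root_.catalanSeries_sq_mul_X_add_one
  have hhalf : C (1 / 2 : ℚ) * 2 = 1 := by
    rw [← map_ofNat C 2, ← map_mul]
    norm_num
  linear_combination C (1 / 2 : ℚ) * hmain + (X * _root_.catalanSeries ^ 3
    - X * d⁄dX ℚ _root_.catalanSeries * (1 - X * _root_.catalanSeries ^ 2) ^ 3) * hhalf
end

section
/- As formal power series, Σ_{k≥2} ( Σ_{p₁+p₂+p₃+p₄ = k-2} (2p₁+1)·Cat(p₁)·Cat(p₂)·Cat(p₃)·Cat(p₄) ) x^k = x²·T⁵/(1 - x·T²). -/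
/-!
With `T = 1 + X T²` and `B = ∑ (2p+1) Cat(p) xᵖ = T + 2X T'`, the series on the left is `X² B T³`.
Differentiating the functional equation gives `T' (1 - 2XT) = T²`, and eliminating `T'` yields
`B (1 - X T²) = T²`; multiplying by `X² T³` gives the claim.
-/

open PowerSeries

namespace PowerSeries

variable {R : Type*} [CommSemiring R]

theorem coeff_prod_fin_eq_sum_antidiagonalTuple {k : ℕ} (f : Fin k → R⟦X⟧) (n : ℕ) :
    coeff n (∏ i, f i) =
      ∑ p ∈ Finset.Nat.antidiagonalTuple k n, ∏ i, coeff (p i) (f i) := by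
  rw [coeff_prod, Finset.finsuppAntidiag, Finset.sum_map,
    ← Finset.piAntidiag_univ_fin_eq_antidiagonalTuple]
  exact Finset.sum_attach _ (fun p : Fin k → ℕ => ∏ i, coeff (p i) (f i))

theorem X_pow_mul_mk (m : ℕ) (g : ℕ → R) :
    X ^ m * mk g = mk fun k => if k < m then 0 else g (k - m) := by
  ext k
  rw [coeff_X_pow_mul', coeff_mk, coeff_mk]
  split_ifs <;> first | rfl | omega

theorem X_mul_derivative_mk (g : ℕ → R) :
    X * d⁄dX R (mk g) = mk fun n => n * g n := by
  ext (_ | n)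
  · simp
  · rw [coeff_succ_X_mul, coeff_derivative, coeff_mk, coeff_mk]
    push_cast
    ring

end PowerSeries

theorem catalanSeries_eq_map :
    _root_.catalanSeries = PowerSeries.map (Nat.castRingHom ℚ) PowerSeries.catalanSeries := by
  ext n
  simp [_root_.catalanSeries]

theorem derivative_catalanSeries_mul_one_sub :
    d⁄dX ℚ _root_.catalanSeries * (1 - 2 * X * _root_.catalanSeries) =
      _root_.catalanSeries ^ 2 := by
  have h := congrArg (d⁄dX ℚ) catalanSeries_eq_one_add_X_mul_sq
  rw [map_add, derivative_one, Derivation.leibniz, Derivation.leibniz_pow, derivative_X] at h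
  simp only [smul_eq_mul, nsmul_eq_mul] at h
  linear_combination h

noncomputable def weightedCatalanSeries : PowerSeries ℚ :=
  PowerSeries.mk fun p => ((2 * p + 1 : ℕ) : ℚ) * (catalan p : ℚ)

theorem weightedCatalanSeries_eq_add_X_mul_derivative :
    weightedCatalanSeries = _root_.catalanSeries + 2 * (X * d⁄dX ℚ _root_.catalanSeries) := by
  rw [_root_.catalanSeries, X_mul_derivative_mk, weightedCatalanSeries]
  ext n
  simp only [map_add, coeff_mk, ← map_ofNat (C (R := ℚ)), coeff_C_mul]
  push_cast
  ring

theorem weightedCatalanSeries_mul_one_sub :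
    weightedCatalanSeries * (1 - X * _root_.catalanSeries ^ 2) = _root_.catalanSeries ^ 2 := by
  rw [weightedCatalanSeries_eq_add_X_mul_derivative]
  linear_combination
    (-_root_.catalanSeries - 2 * X * d⁄dX ℚ _root_.catalanSeries) *
        catalanSeries_eq_one_add_X_mul_sq +
      2 * X * _root_.catalanSeries * derivative_catalanSeries_mul_one_sub

theorem weightedCatalanSeries_mul_catalanSeries_pow_three :
    weightedCatalanSeries * _root_.catalanSeries ^ 3 = mk fun n =>
      ∑ p ∈ Finset.Nat.antidiagonalTuple 4 n,
        ((2 * p 0 + 1 : ℕ) : ℚ) * (catalan (p 0) : ℚ) * (catalan (p 1) : ℚ) *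
          (catalan (p 2) : ℚ) * (catalan (p 3) : ℚ) := by
  set T := _root_.catalanSeries
  have h_prod : ∏ i, ![weightedCatalanSeries, T, T, T] i = weightedCatalanSeries * T ^ 3 := by
    rw [Fin.prod_univ_four, pow_three, ← mul_assoc, ← mul_assoc]
    rfl
  ext n
  rw [← h_prod, coeff_prod_fin_eq_sum_antidiagonalTuple, coeff_mk]
  refine Finset.sum_congr rfl fun p _ => ?_
  simp [Fin.prod_univ_four, weightedCatalanSeries, T, _root_.catalanSeries, mul_assoc]

theorem case_two_series :
    (PowerSeries.mk fun k =>
        if k < 2 then (0 : ℚ)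
        else ∑ p ∈ Finset.Nat.antidiagonalTuple 4 (k - 2),
          ((2 * p 0 + 1 : ℕ) : ℚ) * (catalan (p 0) : ℚ) * (catalan (p 1) : ℚ) *
            (catalan (p 2) : ℚ) * (catalan (p 3) : ℚ)) *
      (1 - PowerSeries.X * _root_.catalanSeries ^ 2) =
      PowerSeries.X ^ 2 * _root_.catalanSeries ^ 5 := by
  calc _ = X ^ 2 * (weightedCatalanSeries * _root_.catalanSeries ^ 3) *
        (1 - X * _root_.catalanSeries ^ 2) := by
        rw [weightedCatalanSeries_mul_catalanSeries_pow_three, X_pow_mul_mk]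
    _ = X ^ 2 * _root_.catalanSeries ^ 5 := by
        linear_combination X ^ 2 * _root_.catalanSeries ^ 3 * weightedCatalanSeries_mul_one_sub
end

section
/- The 2l-th moment of the semicircle distribution with density (1/(2π))√(4-x²) on [-2,2] equals the Catalan number Cat(l), and all odd moments vanish. -/
open Real intervalIntegral

/-!
Substituting `x = 2 sin θ` turns the `2l`-th moment into
`4 ^ (l + 1) ∫ (sin θ ^ (2l) - sin θ ^ (2l + 2))` over `[-π/2, π/2]`. The reduction formula for
`∫ sin ^ n` evaluates `∫ sin θ ^ (2n)` there as `π · binom(2n, n) / 4 ^ n`, so the moment is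
`(4 binom(2l, l) - binom(2l + 2, l + 1)) / 2 = Cat(l)`. Odd moments vanish because the integrand is odd.
-/

theorem Nat.centralBinom_succ_add_two_mul_catalan (n : ℕ) :
    (n + 1).centralBinom + 2 * catalan n = 4 * n.centralBinom := by
  apply Nat.eq_of_mul_eq_mul_left n.succ_pos
  have h₁ := Nat.succ_mul_centralBinom_succ n
  have h₂ := succ_mul_catalan_eq_centralBinom n
  calc (n + 1) * ((n + 1).centralBinom + 2 * catalan n)
      = 2 * (2 * n + 1) * n.centralBinom + 2 * ((n + 1) * catalan n) := by rw [← h₁]; ring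
    _ = (n + 1) * (4 * n.centralBinom) := by rw [h₂]; ring

theorem Function.Odd.intervalIntegral_eq_zero {E : Type*} [NormedAddCommGroup E]
    [NormedSpace ℝ E] {f : ℝ → E} (hf : f.Odd) (a : ℝ) : ∫ x in -a..a, f x = 0 := by
  have h : ∫ x in -a..a, f x = -∫ x in -a..a, f x :=
    calc ∫ x in -a..a, f x = ∫ x in -a..a, f (-x) := by rw [integral_comp_neg, neg_neg]
      _ = -∫ x in -a..a, f x := (integral_congr fun x _ => hf x).trans integral_neg
  have h2 : (2 : ℝ) • ∫ x in -a..a, f x = 0 := by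
    rw [two_smul]; nth_rewrite 1 [h]; exact neg_add_cancel _
  exact (smul_eq_zero.mp h2).resolve_left two_ne_zero

theorem integral_sin_pow_even_neg_pi_div_two (n : ℕ) :
    ∫ θ in -(π / 2)..π / 2, sin θ ^ (2 * n) = π * n.centralBinom / 4 ^ n := by
  induction n with
  | zero => simp
  | succ n ih =>
    have h : ((n : ℝ) + 1) * (n + 1).centralBinom = 2 * (2 * n + 1) * n.centralBinom := by
      exact_mod_cast Nat.succ_mul_centralBinom_succ n
    rw [Nat.mul_succ, integral_sin_pow, ih]
    simp only [sin_neg, cos_neg, cos_pi_div_two, mul_zero, sub_zero, zero_div, zero_add]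
    push_cast
    field_simp
    linear_combination (-2 * (4 : ℝ) ^ n) * h

theorem integral_mul_sqrt_sq_sub_sq {r : ℝ} (hr : 0 ≤ r) {g : ℝ → ℝ} (hg : Continuous g) :
    ∫ x in -r..r, g x * √(r ^ 2 - x ^ 2)
      = ∫ θ in -(π / 2)..π / 2, g (r * sin θ) * (r * cos θ) ^ 2 := by
  have hsubst := integral_comp_mul_deriv (a := -(π / 2)) (b := π / 2) (f := fun θ => r * sin θ)
    (f' := fun θ => r * cos θ) (g := fun x => g x * √(r ^ 2 - x ^ 2))
    (fun θ _ => (hasDerivAt_sin θ).const_mul r) (by fun_prop) (by fun_prop)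
  simp only [Function.comp_apply, sin_neg, sin_pi_div_two, mul_neg, mul_one] at hsubst
  rw [← hsubst]
  refine integral_congr fun θ hθ => ?_
  rw [Set.uIcc_of_le (by linarith [pi_pos])] at hθ
  have hcos : √(r ^ 2 - (r * sin θ) ^ 2) = r * cos θ := by
    rw [← sqrt_sq (mul_nonneg hr (cos_nonneg_of_mem_Icc hθ))]
    congr 1
    linear_combination (-r ^ 2) * sin_sq_add_cos_sq θ
  simp only [hcos]
  ring

theorem integral_pow_even_mul_sqrt_four_sub_sq (l : ℕ) :
    ∫ x in (-2 : ℝ)..2, x ^ (2 * l) * √(4 - x ^ 2) = 2 * π * catalan l := by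
  have hsin : ∀ n : ℕ, IntervalIntegrable (fun θ => sin θ ^ n) MeasureTheory.volume
      (-(π / 2)) (π / 2) := fun n => (continuous_sin.pow n).intervalIntegrable _ _
  calc ∫ x in (-2 : ℝ)..2, x ^ (2 * l) * √(4 - x ^ 2)
      = ∫ θ in -(π / 2)..π / 2, (2 * sin θ) ^ (2 * l) * (2 * cos θ) ^ 2 := by
        rw [← integral_mul_sqrt_sq_sub_sq zero_le_two (continuous_pow _)]
        norm_num
    _ = ∫ θ in -(π / 2)..π / 2, 4 ^ (l + 1) * (sin θ ^ (2 * l) - sin θ ^ (2 * (l + 1))) := by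
        refine integral_congr fun θ _ => ?_
        simp only [pow_mul, mul_pow]
        linear_combination (4 * 4 ^ l * (sin θ ^ 2) ^ l) * cos_sq' θ
    _ = π * (4 * (l.centralBinom : ℝ) - (l + 1).centralBinom) := by
        rw [integral_const_mul, integral_sub (hsin _) (hsin _),
          integral_sin_pow_even_neg_pi_div_two, integral_sin_pow_even_neg_pi_div_two]
        field_simp
        ring
    _ = 2 * π * catalan l := by
        have h : ((l + 1).centralBinom : ℝ) + 2 * catalan l = 4 * l.centralBinom := by
          exact_mod_cast Nat.centralBinom_succ_add_two_mul_catalan l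
        linear_combination (-π) * h

/-- The even moments of the semicircle law are the Catalan numbers and the odd
moments vanish. -/
theorem semicircle_moments (l : ℕ) :
    (∫ x in (-2 : ℝ)..2, x ^ (2 * l) * (1 / (2 * π) * Real.sqrt (4 - x ^ 2)))
        = (catalan l : ℝ) ∧
      (∫ x in (-2 : ℝ)..2, x ^ (2 * l + 1) * (1 / (2 * π) * Real.sqrt (4 - x ^ 2)))
        = 0 := by
  constructor
  · simp_rw [mul_left_comm _ (1 / (2 * π)), integral_const_mul,
      integral_pow_even_mul_sqrt_four_sub_sq]
    field_simp
  · refine Function.Odd.intervalIntegral_eq_zero (fun x => ?_) 2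
    rw [Odd.neg_pow (odd_two_mul_add_one l), neg_sq, neg_mul]
end
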